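/- arXiv:2012.02999 — 2 statements merged into one kernel-verified Lean document; each statement's English description precedes it below -/
import Mathlib

section
/- Suppose α ≥ 0 is such that the matrix power series Ψ(A) = Σ_{k=0}^∞ α^k q_k(A) converges. Then Ψ(A)·[I − αA − μα²(μI − D) + μ²α³(A − S)] = (1 − μ²α²)·I, where μ = 1 − θ. -/
open Matrix Finset

open scoped Classical in
/-- Backtrack-downweighted walk count matrix: entry `(i,j)` is the sum over all walks
of length `k` from `i` to `j` of `θ ^ (number of backtracking steps)`. -/
noncomputable def btdwCount {n : ℕ} (A : Matrix (Fin n) (Fin n) ℝ) (θ : ℝ) (k : ℕ) :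
    Matrix (Fin n) (Fin n) ℝ :=
  Matrix.of fun i j =>
    ∑ w : Fin (k + 1) → Fin n,
      (let w' : ℕ → Fin n := fun s => w ⟨s % (k + 1), Nat.mod_lt s (Nat.succ_pos k)⟩
       if w' 0 = i ∧ w' k = j ∧ (∀ s ∈ Finset.range k, A (w' s) (w' (s + 1)) = 1)
       then θ ^ ((Finset.range (k - 1)).filter fun s => w' s = w' (s + 2)).card
       else 0)

/-- Diagonal matrix `D` with `d_{ii} = (A²)_{ii}`. -/
noncomputable def degDiag {n : ℕ} (A : Matrix (Fin n) (Fin n) ℝ) : Matrix (Fin n) (Fin n) ℝ :=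
  Matrix.diagonal fun i => (A * A) i i

/-- Matrix `S` with `s_{ij} = a_{ij} a_{ji}`. -/
noncomputable def recipMat {n : ℕ} (A : Matrix (Fin n) (Fin n) ℝ) : Matrix (Fin n) (Fin n) ℝ :=
  Matrix.of fun i j => A i j * A j i

/-!
Resolve the walks of length `k + 1` from `i` by their last edge `a → b` and let `P_k(i, a, b)` be
their total weight. Appending a step `b → c` costs a factor `θ` exactly when `c = a`, so
`P_{k+1}(i, b, c) = a_{bc} (q_{k+1}(A)_{ib} - μ P_k(i, c, b))`. Summing this against the
reciprocal-edge weights gives coupled recurrences for `q_k`, `U_k = ∑_b P_k(·, ·, b) a_{b·}` and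
`R_k = ∑_a P_k(·, a, ·) a_{·a}`; eliminating `U` and `R` leaves the three-term recurrence
`q_{k+3} = q_{k+2} A + μ q_{k+1} (μ I - D) - μ² q_k (A - S)`. Multiplying the series `Ψ(A)` by
the corresponding factor therefore leaves only its first three terms `I`, `A` and `A² - μ D`.
-/

theorem Summable.tsum_mul_one_sub_of_recurrence {R : Type*} [Ring R] [TopologicalSpace R]
    [IsTopologicalRing R] [T2Space R] {f : ℕ → R} (hf : Summable f) {X Y Z : R}
    (hrec : ∀ k, f (k + 3) = f (k + 2) * X + f (k + 1) * Y - f k * Z) :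
    (∑' k, f k) * (1 - X - Y + Z) = f 0 * (1 - X - Y) + f 1 * (1 - X) + f 2 := by
  have hshift (m : ℕ) : Summable fun k => f (k + m) := (summable_nat_add_iff m).mpr hf
  have htail : ∑' k, f (k + 3) =
      (∑' k, f (k + 2)) * X + (∑' k, f (k + 1)) * Y - (∑' k, f k) * Z := by
    rw [tsum_congr hrec, Summable.tsum_sub (((hshift 2).mul_right X).add ((hshift 1).mul_right Y))
      (hf.mul_right Z), Summable.tsum_add ((hshift 2).mul_right X) ((hshift 1).mul_right Y),
      (hshift 2).tsum_mul_right, (hshift 1).tsum_mul_right, hf.tsum_mul_right]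
  have hsplit (m : ℕ) : ∑' k, f k = ∑ k ∈ range m, f k + ∑' k, f (k + m) :=
    (hf.sum_add_tsum_nat_add m).symm
  have hsum := hsplit 3
  rw [htail, eq_sub_of_add_eq' (hsplit 2).symm, eq_sub_of_add_eq' (hsplit 1).symm] at hsum
  simp only [sum_range_succ, sum_range_zero, zero_add] at hsum
  rw [mul_add, mul_sub, mul_sub, mul_one]
  nth_rewrite 1 [hsum]
  noncomm_ring

theorem Fin.sum_fun_eq_sum_sum_snoc {β M : Type*} [Fintype β] [AddCommMonoid M] {m : ℕ}
    (f : (Fin (m + 1) → β) → M) :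
    ∑ w, f w = ∑ w : Fin m → β, ∑ x, f (Fin.snoc w x) := by
  rw [← (Fin.snocEquiv fun _ => β).sum_comp, Fintype.sum_prod_type, sum_comm]
  rfl

namespace BTDW

variable {n : ℕ} (A : Matrix (Fin n) (Fin n) ℝ) (θ : ℝ)

/-- Indices are read modulo `k + 1`, as in `btdwCount`. -/
def vertex {k : ℕ} (w : Fin (k + 1) → Fin n) (s : ℕ) : Fin n :=
  w ⟨s % (k + 1), Nat.mod_lt s k.succ_pos⟩

def IsWalk {k : ℕ} (w : Fin (k + 1) → Fin n) : Prop :=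
  ∀ s ∈ range k, A (vertex w s) (vertex w (s + 1)) = 1

def backtracks {k : ℕ} (w : Fin (k + 1) → Fin n) : ℕ :=
  #{s ∈ range (k - 1) | vertex w s = vertex w (s + 2)}

open scoped Classical in
noncomputable def walkWeight {k : ℕ} (w : Fin (k + 1) → Fin n) : ℝ :=
  if IsWalk A w then θ ^ backtracks w else 0

lemma btdwCount_apply (k : ℕ) (i j : Fin n) :
    btdwCount A θ k i j =
      ∑ w : Fin (k + 1) → Fin n,
        if vertex w 0 = i ∧ vertex w k = j then walkWeight A θ w else 0 := by
  refine sum_congr rfl fun w _ => ?_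
  classical
  rw [walkWeight, ← ite_and]
  exact if_congr and_assoc.symm rfl rfl

lemma vertex_zero {k : ℕ} (w : Fin (k + 1) → Fin n) : vertex w 0 = w 0 := rfl

lemma vertex_of_le {k s : ℕ} (w : Fin (k + 1) → Fin n) (h : s ≤ k) :
    vertex w s = w ⟨s, Nat.lt_succ_of_le h⟩ := by
  simp [vertex, Nat.mod_eq_of_lt (Nat.lt_succ_of_le h)]

lemma vertex_snoc_of_le {k s : ℕ} (w : Fin (k + 1) → Fin n) (x : Fin n) (h : s ≤ k) :
    vertex (Fin.snoc w x : Fin (k + 2) → Fin n) s = vertex w s := by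
  rw [vertex_of_le _ (h.trans k.le_succ), vertex_of_le _ h]
  exact Fin.snoc_castSucc (α := fun _ => Fin n) (i := ⟨s, Nat.lt_succ_of_le h⟩) ..

lemma vertex_snoc_last {k : ℕ} (w : Fin (k + 1) → Fin n) (x : Fin n) :
    vertex (Fin.snoc w x : Fin (k + 2) → Fin n) (k + 1) = x := by
  rw [vertex_of_le _ le_rfl]
  exact Fin.snoc_last (α := fun _ => Fin n) ..

lemma isWalk_snoc {k : ℕ} (w : Fin (k + 1) → Fin n) (x : Fin n) :
    IsWalk A (Fin.snoc w x : Fin (k + 2) → Fin n) ↔ IsWalk A w ∧ A (vertex w k) x = 1 := by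
  unfold IsWalk
  rw [range_add_one, forall_mem_insert, vertex_snoc_of_le _ _ le_rfl, vertex_snoc_last, and_comm]
  refine and_congr_left' (forall₂_congr fun s hs => ?_)
  have hs := mem_range.mp hs
  rw [vertex_snoc_of_le _ _ hs.le, vertex_snoc_of_le _ _ hs]

lemma backtracks_snoc {k : ℕ} (w : Fin (k + 2) → Fin n) (x : Fin n) :
    backtracks (Fin.snoc w x : Fin (k + 3) → Fin n) =
      backtracks w + if vertex w k = x then 1 else 0 := by
  unfold backtracks
  rw [show k + 2 - 1 = k + 1 by omega, show k + 1 - 1 = k by omega, range_add_one, filter_insert,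
    vertex_snoc_of_le _ _ (by omega), vertex_snoc_last]
  have hfilter : {s ∈ range k | vertex (Fin.snoc w x : Fin (k + 3) → Fin n) s =
      vertex (Fin.snoc w x : Fin (k + 3) → Fin n) (s + 2)} =
      {s ∈ range k | vertex w s = vertex w (s + 2)} := by
    refine filter_congr fun s hs => ?_
    have hs := mem_range.mp hs
    rw [vertex_snoc_of_le _ _ (by omega), vertex_snoc_of_le _ _ (by omega)]
  split_ifs <;> simp [hfilter]

lemma walkWeight_snoc {k : ℕ} (w : Fin (k + 2) → Fin n) (x : Fin n) :
    walkWeight A θ (Fin.snoc w x : Fin (k + 3) → Fin n) =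
      walkWeight A θ w *
        if A (vertex w (k + 1)) x = 1 then (if vertex w k = x then θ else 1) else 0 := by
  unfold walkWeight
  rw [isWalk_snoc, backtracks_snoc]
  by_cases hw : IsWalk A w <;> by_cases hx : A (vertex w (k + 1)) x = 1 <;>
    by_cases hb : vertex w k = x <;> simp [hw, hx, hb, pow_succ]

lemma walkWeight_snoc_of_fin_one (w : Fin 1 → Fin n) (x : Fin n) :
    walkWeight A θ (Fin.snoc w x : Fin 2 → Fin n) = if A (w 0) x = 1 then 1 else 0 := by
  have hw : IsWalk A w := by simp [IsWalk]
  simp [walkWeight, isWalk_snoc, hw, backtracks, vertex]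

/-- `endCount A θ k i a b` is the total weight of the walks of length `k + 1` from `i` whose last
edge is `a → b`. -/
noncomputable def endCount (k : ℕ) (i a b : Fin n) : ℝ :=
  ∑ w : Fin (k + 2) → Fin n,
    if vertex w 0 = i ∧ vertex w k = a ∧ vertex w (k + 1) = b then walkWeight A θ w else 0

/-- `btdwCount` only tests whether `A i j = 1`, so its recurrences hold for every real `A` in
terms of this matrix. -/
noncomputable def edgeMatrix : Matrix (Fin n) (Fin n) ℝ :=
  Matrix.of fun i j => if A i j = 1 then 1 else 0

lemma edgeMatrix_apply_mul_self (i j : Fin n) :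
    edgeMatrix A i j * edgeMatrix A i j = edgeMatrix A i j := by
  simp only [edgeMatrix, of_apply]
  split_ifs <;> norm_num

lemma edgeMatrix_eq_self (hA : ∀ i j, A i j = 0 ∨ A i j = 1) : edgeMatrix A = A := by
  ext i j
  rcases hA i j with h | h <;> simp [edgeMatrix, h]

lemma endCount_zero (i a b : Fin n) :
    endCount A θ 0 i a b = if a = i then edgeMatrix A i b else 0 := by
  rw [endCount, Fin.sum_fun_eq_sum_sum_snoc, ← (Equiv.funUnique (Fin 1) (Fin n)).symm.sum_comp]
  simp [vertex_zero, vertex_snoc_last, walkWeight_snoc_of_fin_one, ite_and, edgeMatrix,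
    eq_comm (a := i)]
  rfl

lemma btdwCount_succ_apply (k : ℕ) (i j : Fin n) :
    btdwCount A θ (k + 1) i j = ∑ a, endCount A θ k i a j := by
  simp only [btdwCount_apply, endCount]
  rw [sum_comm]
  refine sum_congr rfl fun w _ => ?_
  rw [Fintype.sum_eq_single (vertex w k) fun a ha => if_neg fun h => ha h.2.1.symm]
  exact if_congr (by simp) rfl rfl

lemma btdwCount_zero : btdwCount A θ 0 = 1 := by
  ext i j
  rw [btdwCount_apply, ← (Equiv.funUnique (Fin 1) (Fin n)).symm.sum_comp]
  by_cases h : i = j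
  · subst h
    simp [walkWeight, IsWalk, backtracks, vertex]
  · simp [walkWeight, IsWalk, backtracks, vertex, h]

lemma endCount_succ (k : ℕ) (i b c : Fin n) :
    endCount A θ (k + 1) i b c =
      edgeMatrix A b c * (btdwCount A θ (k + 1) i b - (1 - θ) * endCount A θ k i c b) := by
  have hturn (a : Fin n) : endCount A θ k i a b * (if a = c then θ else 1) =
      endCount A θ k i a b - if a = c then (1 - θ) * endCount A θ k i a b else 0 := by
    split_ifs <;> ring
  rw [btdwCount_succ_apply, ← Fintype.sum_ite_eq' c fun a => (1 - θ) * endCount A θ k i a b,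
    ← sum_sub_distrib, ← sum_congr rfl fun a _ => hturn a, mul_sum]
  simp only [endCount, Fin.sum_fun_eq_sum_sum_snoc (m := k + 2), vertex_snoc_last,
    vertex_snoc_of_le _ _ (Nat.zero_le _), vertex_snoc_of_le _ _ le_rfl, walkWeight_snoc, sum_mul,
    mul_sum]
  conv_rhs => rw [sum_comm]
  refine sum_congr rfl fun w _ => ?_
  rw [Fintype.sum_eq_single c fun x hx => if_neg fun h => hx h.2.2,
    Fintype.sum_eq_single (vertex w k) fun a ha => by
      rw [if_neg fun h => ha h.2.1.symm, zero_mul, mul_zero]]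
  by_cases h : vertex w 0 = i ∧ vertex w (k + 1) = b
  · obtain ⟨h0, rfl⟩ := h
    simp only [h0, edgeMatrix, of_apply, and_true, if_true, mul_ite, ite_mul, mul_one,
      mul_zero, one_mul, zero_mul]
    split_ifs <;> rfl
  · rw [if_neg (by tauto), if_neg (by tauto), zero_mul, mul_zero]

lemma endCount_mul_edgeMatrix (k : ℕ) (i a b : Fin n) :
    endCount A θ k i a b * edgeMatrix A a b = endCount A θ k i a b := by
  cases k with
  | zero =>
    rw [endCount_zero]
    split_ifs with h
    · rw [h, edgeMatrix_apply_mul_self]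
    · rw [zero_mul]
  | succ k => rw [endCount_succ, mul_right_comm, edgeMatrix_apply_mul_self]

/-- Walks of length `k + 1` whose last edge `a → b` is reciprocated, by penultimate vertex `a`. -/
noncomputable def penultRecipCount (k : ℕ) : Matrix (Fin n) (Fin n) ℝ :=
  Matrix.of fun i a => ∑ b, endCount A θ k i a b * edgeMatrix A b a

/-- Walks of length `k + 1` whose last edge `a → b` is reciprocated, by last vertex `b`. -/
noncomputable def lastRecipCount (k : ℕ) : Matrix (Fin n) (Fin n) ℝ :=
  Matrix.of fun i b => ∑ a, endCount A θ k i a b * edgeMatrix A b a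

lemma btdwCount_one : btdwCount A θ 1 = edgeMatrix A := by
  ext i j
  simp [btdwCount_succ_apply, endCount_zero]

lemma penultRecipCount_zero : penultRecipCount A θ 0 = degDiag (edgeMatrix A) := by
  ext i j
  by_cases h : i = j
  · subst h
    simp [penultRecipCount, endCount_zero, degDiag, Matrix.mul_apply]
  · simp [penultRecipCount, endCount_zero, degDiag, Ne.symm h, h]

lemma lastRecipCount_zero : lastRecipCount A θ 0 = recipMat (edgeMatrix A) := by
  ext i j
  simp [lastRecipCount, endCount_zero, recipMat]

lemma btdwCount_add_two (k : ℕ) :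
    btdwCount A θ (k + 2) =
      btdwCount A θ (k + 1) * edgeMatrix A - (1 - θ) • penultRecipCount A θ k := by
  ext i c
  simp only [btdwCount_succ_apply A θ (k + 1), endCount_succ, Matrix.sub_apply,
    Matrix.smul_apply, mul_apply, penultRecipCount, of_apply, smul_eq_mul, mul_sum,
    ← sum_sub_distrib]
  refine sum_congr rfl fun b _ => ?_
  ring

lemma penultRecipCount_succ (k : ℕ) :
    penultRecipCount A θ (k + 1) =
      btdwCount A θ (k + 1) * degDiag (edgeMatrix A) - (1 - θ) • lastRecipCount A θ k := by
  ext i j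
  simp only [penultRecipCount, lastRecipCount, degDiag, Matrix.sub_apply, Matrix.smul_apply,
    mul_diagonal, of_apply]
  simp only [endCount_succ, mul_apply, smul_eq_mul, mul_sum, ← sum_sub_distrib]
  refine sum_congr rfl fun b _ => ?_
  linear_combination (-(1 - θ) * edgeMatrix A j b) * endCount_mul_edgeMatrix A θ k i b j

lemma lastRecipCount_succ (k : ℕ) :
    lastRecipCount A θ (k + 1) =
      btdwCount A θ (k + 1) * recipMat (edgeMatrix A) - (1 - θ) • penultRecipCount A θ k := by
  ext i j
  simp only [penultRecipCount, lastRecipCount, endCount_succ, recipMat, Matrix.sub_apply,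
    Matrix.smul_apply, mul_apply, of_apply, smul_eq_mul, mul_sum, ← sum_sub_distrib]
  refine sum_congr rfl fun a _ => ?_
  linear_combination (-(1 - θ) * edgeMatrix A a j) * endCount_mul_edgeMatrix A θ k i j a

lemma btdwCount_two :
    btdwCount A θ 2 = edgeMatrix A * edgeMatrix A - (1 - θ) • degDiag (edgeMatrix A) := by
  rw [btdwCount_add_two A θ 0, btdwCount_one, penultRecipCount_zero]

lemma btdwCount_add_three (k : ℕ) :
    btdwCount A θ (k + 3) =
      btdwCount A θ (k + 2) * edgeMatrix A +
        (1 - θ) • (btdwCount A θ (k + 1) * ((1 - θ) • 1 - degDiag (edgeMatrix A))) -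
        (1 - θ) ^ 2 • (btdwCount A θ k * (edgeMatrix A - recipMat (edgeMatrix A))) := by
  rw [btdwCount_add_two A θ (k + 1)]
  cases k with
  | zero =>
    rw [penultRecipCount_succ, lastRecipCount_zero, btdwCount_one, btdwCount_zero]
    simp only [Matrix.mul_sub, Matrix.mul_smul, Matrix.mul_one, Matrix.one_mul]
    module
  | succ k =>
    have hpenult : (1 - θ) • penultRecipCount A θ k =
        btdwCount A θ (k + 1) * edgeMatrix A - btdwCount A θ (k + 2) := by
      rw [btdwCount_add_two]
      abel
    rw [penultRecipCount_succ, lastRecipCount_succ, smul_sub, hpenult]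
    simp only [Matrix.mul_sub, Matrix.mul_smul, Matrix.mul_one]
    module

end BTDW

theorem btdw_generating_function_general {n : ℕ} (A : Matrix (Fin n) (Fin n) ℝ)
    (hA01 : ∀ i j, A i j = 0 ∨ A i j = 1)
    (θ : ℝ) (μ : ℝ) (hμ : μ = 1 - θ)
    (α : ℝ)
    (hsum : Summable fun k : ℕ => α ^ k • btdwCount A θ k) :
    (∑' k : ℕ, α ^ k • btdwCount A θ k) *
        (1 - α • A - (μ * α ^ 2) • (μ • 1 - degDiag A) +
          (μ ^ 2 * α ^ 3) • (A - recipMat A)) =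
      (1 - μ ^ 2 * α ^ 2) • (1 : Matrix (Fin n) (Fin n) ℝ) := by
  subst hμ
  have hE := BTDW.edgeMatrix_eq_self A hA01
  rw [hsum.tsum_mul_one_sub_of_recurrence fun k => by
      rw [BTDW.btdwCount_add_three, hE, smul_sub, smul_mul_smul_comm, smul_mul_smul_comm,
        smul_mul_smul_comm]
      module,
    BTDW.btdwCount_zero, BTDW.btdwCount_one, BTDW.btdwCount_two, hE]
  simp only [Matrix.mul_sub, Matrix.mul_smul, Matrix.smul_mul, Matrix.mul_one, Matrix.one_mul,
    smul_sub, smul_smul]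
  module

/-- Theorem 4.1: the generating function `Ψ(A) = Σ α^k q_k(A)` satisfies
`Ψ(A)[I − αA − μα²(μI − D) + μ²α³(A − S)] = (1 − μ²α²) I`. -/
theorem btdw_generating_function {n : ℕ} (hn : 1 ≤ n) (A : Matrix (Fin n) (Fin n) ℝ)
    (hA01 : ∀ i j, A i j = 0 ∨ A i j = 1) (hAdiag : ∀ i, A i i = 0)
    (θ : ℝ) (hθ0 : 0 ≤ θ) (hθ1 : θ ≤ 1) (μ : ℝ) (hμ : μ = 1 - θ)
    (α : ℝ) (hα : 0 ≤ α)
    (hsum : Summable fun k : ℕ => α ^ k • btdwCount A θ k) :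
    (∑' k : ℕ, α ^ k • btdwCount A θ k) *
        (1 - α • A - (μ * α ^ 2) • (μ • 1 - degDiag A) +
          (μ ^ 2 * α ^ 3) • (A - recipMat A)) =
      (1 - μ ^ 2 * α ^ 2) • (1 : Matrix (Fin n) (Fin n) ℝ) :=
  btdw_generating_function_general A hA01 θ μ hμ α hsum
end

section
/- Let {c_k}_{k≥0} be real coefficients such that the matrix power series f_0(Z) = Σ_{k=0}^∞ c_k Z^k and f_2(Z) = Σ_{k=0}^∞ c_{k+2} Z^k converge. Then Σ_{k=0}^∞ c_k q_k(A) equals the (3,3) n×n block of the matrix f_0(Z) − μ²·f_2(Z), where μ = 1 − θ. -/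
open Matrix Finset

/-- The block matrix `Z = [[0, I, 0], [0, 0, I], [−μ²(A−S), μ(μI−D), A]]` with `μ = 1 − θ`. -/
noncomputable def Zmat {n : ℕ} (A : Matrix (Fin n) (Fin n) ℝ) (θ : ℝ) :
    Matrix ((Fin n ⊕ Fin n) ⊕ Fin n) ((Fin n ⊕ Fin n) ⊕ Fin n) ℝ :=
  Matrix.fromBlocks
    (Matrix.fromBlocks 0 1 0 0)
    (Matrix.fromRows 0 1)
    (Matrix.fromCols (-((1 - θ) ^ 2) • (A - recipMat A)) ((1 - θ) • ((1 - θ) • 1 - degDiag A)))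
    A

/-- Stack three `n × n` matrices vertically into a `3n × n` matrix. -/
noncomputable def stack3 {n : ℕ} (X Y W : Matrix (Fin n) (Fin n) ℝ) :
    Matrix ((Fin n ⊕ Fin n) ⊕ Fin n) (Fin n) ℝ :=
  Matrix.fromRows (Matrix.fromRows X Y) W

/-!
The last block column of `Z ^ k` is `(s k, s (k + 1), s (k + 2))`, where `s` solves the block
companion recurrence `s (k + 3) = Z₃₁ s k + Z₃₂ s (k + 1) + A s (k + 2)` with `s 0 = s 1 = 0`,
`s 2 = 1`. Splitting off the first step of a walk, and then whether the second step returns to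
the start, shows that the BTDW counts `q k` obey the same recurrence. Comparing the first three
values gives `q k = s (k + 2) - μ² s k`, and since `s 0 = s 1 = 0`, summing against `c k` turns
`Σ c k μ² s k` into `μ² Σ c (k + 2) s (k + 2)`.
-/

namespace Matrix

variable {m α : Type*} [Fintype m] [DecidableEq m]

section Ring

variable [Ring α]

def blockCompanion (C₁ C₂ C₃ : Matrix m m α) : Matrix ((m ⊕ m) ⊕ m) ((m ⊕ m) ⊕ m) α :=
  fromBlocks (fromBlocks 0 1 0 0) (fromRows 0 1) (fromCols C₁ C₂) C₃

def companionSeq (C₁ C₂ C₃ : Matrix m m α) : ℕ → Matrix m m α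
  | 0 => 0
  | 1 => 0
  | 2 => 1
  | k + 3 => C₁ * companionSeq C₁ C₂ C₃ k + C₂ * companionSeq C₁ C₂ C₃ (k + 1)
      + C₃ * companionSeq C₁ C₂ C₃ (k + 2)

theorem companionSeq_add_three (C₁ C₂ C₃ : Matrix m m α) (k : ℕ) :
    companionSeq C₁ C₂ C₃ (k + 3) = C₁ * companionSeq C₁ C₂ C₃ k
      + C₂ * companionSeq C₁ C₂ C₃ (k + 1) + C₃ * companionSeq C₁ C₂ C₃ (k + 2) := rfl

theorem blockCompanion_mul_fromRows (C₁ C₂ C₃ X Y W : Matrix m m α) :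
    blockCompanion C₁ C₂ C₃ * fromRows (fromRows X Y) W
      = fromRows (fromRows Y W) (C₁ * X + C₂ * Y + C₃ * W) := by
  ext ((i | i) | i) j <;> simp [blockCompanion, mul_apply, Fintype.sum_sum_type, one_apply]

-- Without the type ascription `*` elaborates to the multiplication of `CStarMatrix`.
theorem blockCompanion_pow_mul_fromRows (C₁ C₂ C₃ : Matrix m m α) (k : ℕ) :
    blockCompanion C₁ C₂ C₃ ^ k * (fromRows (fromRows 0 0) 1 : Matrix ((m ⊕ m) ⊕ m) m α)
      = fromRows (fromRows (companionSeq C₁ C₂ C₃ k) (companionSeq C₁ C₂ C₃ (k + 1)))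
          (companionSeq C₁ C₂ C₃ (k + 2)) := by
  induction k with
  | zero => exact Matrix.one_mul _
  | succ k ih =>
    rw [pow_succ', Matrix.mul_assoc, ih, blockCompanion_mul_fromRows]
    rfl

theorem toBlocks₂₂_blockCompanion_pow (C₁ C₂ C₃ : Matrix m m α) (k : ℕ) :
    (blockCompanion C₁ C₂ C₃ ^ k).toBlocks₂₂ = companionSeq C₁ C₂ C₃ (k + 2) := by
  have h := congrArg toRows₂ (blockCompanion_pow_mul_fromRows C₁ C₂ C₃ k)
  rw [toRows₂_fromRows] at h
  rw [← h]
  ext i j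
  simp [toRows₂, toBlocks₂₂, mul_apply, Fintype.sum_sum_type, one_apply]

end Ring

theorem eq_companionSeq_sub_smul [CommRing α] {C₁ C₂ C₃ : Matrix m m α} (r : α)
    {x : ℕ → Matrix m m α}
    (h₀ : x 0 = 1) (h₁ : x 1 = C₃) (h₂ : x 2 = C₂ + C₃ * C₃ - r • 1)
    (hrec : ∀ k, x (k + 3) = C₁ * x k + C₂ * x (k + 1) + C₃ * x (k + 2)) (k : ℕ) :
    x k = companionSeq C₁ C₂ C₃ (k + 2) - r • companionSeq C₁ C₂ C₃ k := by
  set y : ℕ → Matrix m m α := fun i => companionSeq C₁ C₂ C₃ (i + 2) - r • companionSeq C₁ C₂ C₃ i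
  have hyrec : ∀ i, y (i + 3) = C₁ * y i + C₂ * y (i + 1) + C₃ * y (i + 2) := fun i => by
    simp only [y, companionSeq_add_three, Matrix.mul_sub, Matrix.mul_smul, smul_add]
    abel
  suffices h : ∀ i, x i = y i ∧ x (i + 1) = y (i + 1) ∧ x (i + 2) = y (i + 2) from (h k).1
  intro i
  induction i with
  | zero => refine ⟨?_, ?_, ?_⟩ <;> simp [y, companionSeq, h₀, h₁, h₂]
  | succ i ih =>
    obtain ⟨h0, h1, h2⟩ := ih
    exact ⟨h1, h2, by rw [hrec, hyrec, h0, h1, h2]⟩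

theorem toBlocks₂₂_smul {l m n o R S : Type*} [SMul S R] (c : S)
    (M : Matrix (l ⊕ m) (n ⊕ o) R) : (c • M).toBlocks₂₂ = c • M.toBlocks₂₂ := rfl

end Matrix

theorem HasSum.matrix_toBlocks₂₂ {ι l m n o R : Type*} [TopologicalSpace R] [AddCommMonoid R]
    {f : ι → Matrix (l ⊕ m) (n ⊕ o) R} {a : Matrix (l ⊕ m) (n ⊕ o) R} (hf : HasSum f a) :
    HasSum (fun k => (f k).toBlocks₂₂) a.toBlocks₂₂ :=
  Pi.hasSum.2 fun _ => Pi.hasSum.2 fun _ => Pi.hasSum.1 (Pi.hasSum.1 hf _) _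

theorem HasSum.smul_sub_smul_shift {R M : Type*} [CommSemiring R] [AddCommGroup M] [Module R M]
    [TopologicalSpace M] [IsTopologicalAddGroup M] [ContinuousConstSMul R M]
    {x : ℕ → M} (hx₀ : x 0 = 0) (hx₁ : x 1 = 0) {c : ℕ → R} {a b : M}
    (ha : HasSum (fun k => c k • x (k + 2)) a) (hb : HasSum (fun k => c (k + 2) • x (k + 2)) b)
    (r : R) : HasSum (fun k => c k • (x (k + 2) - r • x k)) (a - r • b) := by
  have hb' : HasSum (fun k => c k • x k) b := by
    rw [← hasSum_nat_add_iff' 2]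
    simpa [Finset.sum_range_succ, hx₀, hx₁] using hb
  simpa only [smul_sub, smul_comm (c _) r] using ha.sub (hb'.const_smul r)

namespace Fin

theorem cons_ofNat_zero {α : Type*} {k : ℕ} (x : α) (t : Fin (k + 1) → α) :
    (cons x t : Fin (k + 2) → α) (Fin.ofNat (k + 2) 0) = x := rfl

theorem cons_ofNat_succ {α : Type*} {k s : ℕ} (x : α) (t : Fin (k + 1) → α) (hs : s ≤ k) :
    (cons x t : Fin (k + 2) → α) (Fin.ofNat (k + 2) (s + 1)) = t (Fin.ofNat (k + 1) s) := by
  have : Fin.ofNat (k + 2) (s + 1) = (Fin.ofNat (k + 1) s).succ := by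
    ext; simp [Nat.mod_eq_of_lt (by omega : s + 1 < k + 2), Nat.mod_eq_of_lt (by omega : s < k + 1)]
  rw [this, cons_succ]

end Fin

noncomputable def Zmat₃₁ {n : ℕ} (A : Matrix (Fin n) (Fin n) ℝ) (θ : ℝ) :
    Matrix (Fin n) (Fin n) ℝ :=
  -((1 - θ) ^ 2) • (A - recipMat A)

noncomputable def Zmat₃₂ {n : ℕ} (A : Matrix (Fin n) (Fin n) ℝ) (θ : ℝ) :
    Matrix (Fin n) (Fin n) ℝ :=
  (1 - θ) • ((1 - θ) • 1 - degDiag A)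

theorem Zmat_eq_blockCompanion {n : ℕ} (A : Matrix (Fin n) (Fin n) ℝ) (θ : ℝ) :
    Zmat A θ = blockCompanion (Zmat₃₁ A θ) (Zmat₃₂ A θ) A := rfl

theorem Zmat₃₁_mul_apply {n : ℕ} (A X : Matrix (Fin n) (Fin n) ℝ) (θ : ℝ) (i j : Fin n) :
    (Zmat₃₁ A θ * X) i j = -(1 - θ) ^ 2 * ∑ m, (A i m - A i m * A m i) * X m j := by
  simp only [Zmat₃₁, recipMat, mul_apply, Matrix.smul_apply, Matrix.sub_apply, of_apply,
    smul_eq_mul, mul_sum]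
  exact sum_congr rfl fun m _ => by ring

theorem Zmat₃₂_mul_apply {n : ℕ} (A X : Matrix (Fin n) (Fin n) ℝ) (θ : ℝ) (i j : Fin n) :
    (Zmat₃₂ A θ * X) i j = (1 - θ) * ((1 - θ) - (A * A) i i) * X i j := by
  simp only [Zmat₃₂, degDiag, Matrix.smul_mul, Matrix.sub_mul, Matrix.one_mul, diagonal_mul,
    Matrix.smul_apply, Matrix.sub_apply, smul_eq_mul]
  ring

namespace Btdw

variable {n : ℕ} (A : Matrix (Fin n) (Fin n) ℝ) (θ : ℝ)

def backtrackWeight (p l : Fin n) : ℝ := if p = l then θ else 1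

/-- Weight of the walk `v 0, …, v k` with an extra factor `c (v 1)`; `c = backtrackWeight θ p`
accounts for a walk that arrived at `v 0` from `p`. -/
def walkWeight : ℕ → (Fin n → ℝ) → (ℕ → Fin n) → ℝ
  | 0, _, _ => 1
  | k + 1, c, v =>
      A (v 0) (v 1) * c (v 1) * walkWeight k (backtrackWeight θ (v 0)) fun s => v (s + 1)

def walkSum : ℕ → (Fin n → ℝ) → Matrix (Fin n) (Fin n) ℝ
  | 0, _ => 1
  | k + 1, c => of fun a j => ∑ m, A a m * c m * walkSum k (backtrackWeight θ a) m j

variable {A θ}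

theorem walkSum_zero (c : Fin n → ℝ) : walkSum A θ 0 c = 1 := rfl

theorem walkSum_succ_apply (k : ℕ) (c : Fin n → ℝ) (a j : Fin n) :
    walkSum A θ (k + 1) c a j = ∑ m, A a m * c m * walkSum A θ k (backtrackWeight θ a) m j := rfl

theorem walkWeight_congr {k : ℕ} {c : Fin n → ℝ} {v v' : ℕ → Fin n}
    (h : ∀ s ≤ k, v s = v' s) : walkWeight A θ k c v = walkWeight A θ k c v' := by
  induction k generalizing c v v' with
  | zero => rfl
  | succ k ih =>
    simp only [walkWeight, h 0 (by omega), h 1 (by omega)]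
    rw [ih fun s hs => h (s + 1) (by omega)]

theorem walkWeight_eq_prod (k : ℕ) (c : Fin n → ℝ) (v : ℕ → Fin n) :
    walkWeight A θ k c v = (∏ s ∈ range k, A (v s) (v (s + 1))) * (if k = 0 then 1 else c (v 1)) *
      ∏ s ∈ range (k - 1), backtrackWeight θ (v s) (v (s + 2)) := by
  induction k generalizing c v with
  | zero => simp [walkWeight]
  | succ k ih =>
    rw [walkWeight, ih, prod_range_succ' _ k]
    rcases k with _ | k
    · simp
    · simp only [if_neg (Nat.succ_ne_zero _), Nat.add_sub_cancel, prod_range_succ' _ k]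
      ring

theorem walkWeight_cons {k : ℕ} (c : Fin n → ℝ) (x : Fin n) (t : Fin (k + 1) → Fin n) :
    walkWeight A θ (k + 1) c (fun s => (Fin.cons x t : Fin (k + 2) → Fin n) (Fin.ofNat (k + 2) s))
      = A x (t (Fin.ofNat (k + 1) 0)) * c (t (Fin.ofNat (k + 1) 0)) *
          walkWeight A θ k (backtrackWeight θ x) (fun s => t (Fin.ofNat (k + 1) s)) := by
  rw [walkWeight, walkWeight_congr fun s hs => Fin.cons_ofNat_succ x t hs, Fin.cons_ofNat_zero,
    Fin.cons_ofNat_succ x t (Nat.zero_le k)]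

theorem sum_walkWeight (k : ℕ) (c : Fin n → ℝ) (a j : Fin n) :
    ∑ u : Fin (k + 1) → Fin n,
      (let v := fun s => u (Fin.ofNat (k + 1) s)
       if v 0 = a ∧ v k = j then walkWeight A θ k c v else 0) = walkSum A θ k c a j := by
  induction k generalizing c a with
  | zero =>
    rw [← (Equiv.funUnique (Fin 1) (Fin n)).symm.sum_comp]
    rcases eq_or_ne a j with rfl | h
    · simp [walkWeight, walkSum]
    · simp [walkWeight, walkSum, h]
  | succ k ih =>
    rw [← (Fin.consEquiv fun _ => Fin n).sum_comp, Fintype.sum_prod_type]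
    simp only [Fin.consEquiv_apply, Fin.cons_ofNat_zero, Fin.cons_ofNat_succ _ _ le_rfl,
      walkWeight_cons, ite_and, sum_ite_irrel, sum_const_zero, Fintype.sum_ite_eq']
    simp only [walkSum, of_apply, ← ih, mul_sum]
    rw [sum_comm]
    refine sum_congr rfl fun t _ => ?_
    simp only [ite_and, mul_ite, mul_zero, Fintype.sum_ite_eq]

theorem btdwCount_eq_walkSum (hA01 : ∀ i j, A i j = 0 ∨ A i j = 1) (k : ℕ) :
    btdwCount A θ k = walkSum A θ k 1 := by
  ext i j
  rw [← sum_walkWeight, btdwCount, of_apply]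
  refine sum_congr rfl fun u _ => ?_
  simp only [walkWeight_eq_prod, Pi.one_apply, ite_self, mul_one, Fin.ofNat]
  split_ifs with hwalk hends hends
  · rw [prod_eq_one hwalk.2.2, one_mul, ← prod_const, prod_filter]
    rfl
  · exact absurd ⟨hwalk.1, hwalk.2.1⟩ hends
  · obtain ⟨s, hs, hne⟩ := not_forall₂.mp fun h => hwalk ⟨hends.1, hends.2, h⟩
    rw [prod_eq_zero hs ((hA01 _ _).resolve_right hne), zero_mul]
  · rfl

theorem walkSum_succ_backtrackWeight (k : ℕ) (p a j : Fin n) :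
    walkSum A θ (k + 1) (backtrackWeight θ p) a j
      = walkSum A θ (k + 1) 1 a j
        - (1 - θ) * (A a p * walkSum A θ k (backtrackWeight θ a) p j) := by
  have hweight : ∀ m, backtrackWeight θ p m = 1 - (1 - θ) * if p = m then 1 else 0 := fun m => by
    unfold backtrackWeight; split_ifs <;> ring
  simp only [walkSum, of_apply, Pi.one_apply, hweight, mul_sub, sub_mul, mul_one, sum_sub_distrib,
    mul_ite, ite_mul, mul_zero, zero_mul, sum_ite_eq, mem_univ, if_true]
  ring

theorem walkSum_congr {k : ℕ} {c c' : Fin n → ℝ} {a : Fin n} (h : ∀ l, A a l ≠ 0 → c l = c' l)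
    (j : Fin n) : walkSum A θ k c a j = walkSum A θ k c' a j := by
  cases k with
  | zero => rfl
  | succ k =>
    simp only [walkSum, of_apply]
    refine sum_congr rfl fun m _ => ?_
    by_cases hm : A a m = 0
    · simp [hm]
    · rw [h m hm]

theorem walkSum_one : walkSum A θ 1 1 = A := by
  ext i j
  simp [walkSum_succ_apply, walkSum_zero, one_apply]

theorem walkSum_two : walkSum A θ 2 1 = A * A - (1 - θ) • degDiag A := by
  ext i j
  rw [walkSum_succ_apply]
  simp only [Pi.one_apply, mul_one, walkSum_succ_backtrackWeight 0, zero_add, walkSum_one,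
    walkSum_zero, Matrix.sub_apply, Matrix.smul_apply, degDiag, diagonal_apply, mul_apply,
    one_apply, smul_eq_mul, mul_sub, sum_sub_distrib]
  split_ifs with hij
  · simp only [mul_one, mul_sum]
    exact congrArg _ (sum_congr rfl fun m _ => by ring)
  · simp

theorem walkSum_add_three (hA01 : ∀ i j, A i j = 0 ∨ A i j = 1) (k : ℕ) :
    walkSum A θ (k + 3) 1 = Zmat₃₁ A θ * walkSum A θ k 1 + Zmat₃₂ A θ * walkSum A θ (k + 1) 1
      + A * walkSum A θ (k + 2) 1 := by
  ext i j
  have hfirst : walkSum A θ (k + 3) 1 i j = (A * walkSum A θ (k + 2) 1) i j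
      - (1 - θ) * ∑ m, A i m * A m i * walkSum A θ (k + 1) (backtrackWeight θ m) i j := by
    simp only [walkSum_succ_apply (k + 2), Pi.one_apply, mul_one,
      walkSum_succ_backtrackWeight (k + 1) i, mul_sub, sum_sub_distrib, mul_sum, mul_apply]
    exact congrArg _ (sum_congr rfl fun m _ => by ring)
  have hreturn : ∑ m, A i m * A m i * walkSum A θ (k + 1) (backtrackWeight θ m) i j
      = (A * A) i i * walkSum A θ (k + 1) 1 i j
        - (1 - θ) * ∑ m, A i m * A m i * walkSum A θ k (backtrackWeight θ i) m j := by
    simp only [walkSum_succ_backtrackWeight, mul_sub, sum_sub_distrib, mul_sum, mul_apply, sum_mul]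
    refine congrArg _ (sum_congr rfl fun m _ => ?_)
    rcases hA01 i m with h | h <;> simp only [h] <;> ring
  have hleave : ∑ m, A i m * A m i * walkSum A θ k (backtrackWeight θ i) m j
      = walkSum A θ (k + 1) 1 i j - ∑ m, (A i m - A i m * A m i) * walkSum A θ k 1 m j := by
    rw [eq_sub_iff_add_eq, ← sum_add_distrib, walkSum_succ_apply]
    refine sum_congr rfl fun m _ => ?_
    rcases hA01 m i with h | h
    · rw [walkSum_congr (c := backtrackWeight θ i) (c' := 1)
        fun l hl => if_neg fun hil => hl (hil ▸ h)]
      simp [h]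
    · simp [h]
  rw [hfirst, hreturn, hleave, Matrix.add_apply, Matrix.add_apply, Zmat₃₁_mul_apply,
    Zmat₃₂_mul_apply]
  ring

end Btdw

theorem btdwCount_eq_companionSeq {n : ℕ} {A : Matrix (Fin n) (Fin n) ℝ}
    (hA01 : ∀ i j, A i j = 0 ∨ A i j = 1) (θ : ℝ) (k : ℕ) :
    btdwCount A θ k = companionSeq (Zmat₃₁ A θ) (Zmat₃₂ A θ) A (k + 2)
      - (1 - θ) ^ 2 • companionSeq (Zmat₃₁ A θ) (Zmat₃₂ A θ) A k := by
  simp only [Btdw.btdwCount_eq_walkSum hA01]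
  refine eq_companionSeq_sub_smul (x := fun k => Btdw.walkSum A θ k 1) _ (Btdw.walkSum_zero 1)
    Btdw.walkSum_one ?_ (Btdw.walkSum_add_three hA01) k
  rw [Btdw.walkSum_two, Zmat₃₂]
  module

theorem btdw_general_generating_function_block_general {n : ℕ}
    (A : Matrix (Fin n) (Fin n) ℝ)
    (hA01 : ∀ i j, A i j = 0 ∨ A i j = 1)
    (θ : ℝ) (μ : ℝ) (hμ : μ = 1 - θ)
    (c : ℕ → ℝ)
    (hc0 : Summable fun k : ℕ => c k • Zmat A θ ^ k)
    (hc2 : Summable fun k : ℕ => c (k + 2) • Zmat A θ ^ k) :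
    (Summable fun k : ℕ => c k • btdwCount A θ k) ∧
    (∑' k : ℕ, c k • btdwCount A θ k) =
      Matrix.of fun i j =>
        ((∑' k : ℕ, c k • Zmat A θ ^ k) - μ ^ 2 • ∑' k : ℕ, c (k + 2) • Zmat A θ ^ k)
          (Sum.inr i) (Sum.inr j) := by
  subst hμ
  have hblock (d : ℕ → ℝ) (hd : Summable fun k => d k • Zmat A θ ^ k) :
      HasSum (fun k => d k • companionSeq (Zmat₃₁ A θ) (Zmat₃₂ A θ) A (k + 2))
        (∑' k, d k • Zmat A θ ^ k).toBlocks₂₂ := by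
    simpa only [Zmat_eq_blockCompanion, toBlocks₂₂_smul, toBlocks₂₂_blockCompanion_pow] using
      hd.hasSum.matrix_toBlocks₂₂
  have h := (hblock c hc0).smul_sub_smul_shift rfl rfl (hblock (fun k => c (k + 2)) hc2)
    ((1 - θ) ^ 2)
  simp only [← btdwCount_eq_companionSeq hA01] at h
  exact ⟨h.summable, h.tsum_eq⟩

/-- Theorem 7.1, second part: if `f_0(Z) = Σ c_k Z^k` and `f_2(Z) = Σ c_{k+2} Z^k`
converge, then `Σ c_k q_k(A)` converges and equals the `(3,3)` (bottom-right) `n × n`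
block of `f_0(Z) − μ² f_2(Z)`. -/
theorem btdw_general_generating_function_block {n : ℕ} (hn : 1 ≤ n)
    (A : Matrix (Fin n) (Fin n) ℝ)
    (hA01 : ∀ i j, A i j = 0 ∨ A i j = 1) (hAdiag : ∀ i, A i i = 0)
    (θ : ℝ) (hθ0 : 0 ≤ θ) (hθ1 : θ ≤ 1) (μ : ℝ) (hμ : μ = 1 - θ)
    (c : ℕ → ℝ)
    (hc0 : Summable fun k : ℕ => c k • Zmat A θ ^ k)
    (hc2 : Summable fun k : ℕ => c (k + 2) • Zmat A θ ^ k) :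
    (Summable fun k : ℕ => c k • btdwCount A θ k) ∧
    (∑' k : ℕ, c k • btdwCount A θ k) =
      Matrix.of fun i j =>
        ((∑' k : ℕ, c k • Zmat A θ ^ k) - μ ^ 2 • ∑' k : ℕ, c (k + 2) • Zmat A θ ^ k)
          (Sum.inr i) (Sum.inr j) :=
  btdw_general_generating_function_block_general A hA01 θ μ hμ c hc0 hc2
end
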